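/- Let U be a nonempty finite type, X take values in {A,B}, and let p be a joint pmf of (U,X) with P(X=x, U=u)>0 for every u and x. Let Q be generated by the kernel w({x}|u,x) = π(x)/P(X=x|U=u), w(q'|u,x)=0 for the other singleton q', and w(qAB|u,x) = 1 − π(x)/P(X=x|U=u), where π(x) = min over u of P(X=x|U=u). Then the marginal distribution of Q satisfies P(Q={x}) = π(x) for each x ∈ {A,B} and P(Q=qAB) = 1 − π(A) − π(B); consequently the expected query length is E[ℓ(Q)] = 2 − π(A) − π(B). -/

import Mathlib

/-- The two sources. -/
inductive Src | A | B
deriving DecidableEq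

instance : Fintype Src where
  elems := {Src.A, Src.B}
  complete := by intro x; cases x <;> simp

/-- The three possible queries: only source A, only source B, or both. -/
inductive Qry | qA | qB | qAB
deriving DecidableEq

instance : Fintype Qry where
  elems := {Qry.qA, Qry.qB, Qry.qAB}
  complete := by intro x; cases x <;> simp

/-- The singleton query associated to a source. -/
def singletonQ : Src → Qry
  | Src.A => Qry.qA
  | Src.B => Qry.qB

/-- The conditional probability `P(X = x | U = u)` derived from the joint pmf `p` of `(U,X)`. -/
noncomputable def condP {U : Type} [Fintype U] (p : U → Src → ℝ) (x : Src) (u : U) : ℝ :=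
  p u x / (∑ x', p u x')

/-- `π(x) = min_u P(X = x | U = u)`. -/
noncomputable def piMin {U : Type} [Fintype U] [Nonempty U] (p : U → Src → ℝ) (x : Src) : ℝ :=
  Finset.univ.inf' Finset.univ_nonempty (fun u => condP p x u)

/-- The ON-OFF privacy query kernel: `w({x}|u,x) = π(x)/P(X=x|U=u)`, the other singleton gets
probability `0`, and `w(qAB|u,x) = 1 - π(x)/P(X=x|U=u)`. -/
noncomputable def kernel {U : Type} [Fintype U] [Nonempty U] (p : U → Src → ℝ)
    (u : U) (x : Src) (q : Qry) : ℝ :=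
  if q = singletonQ x then piMin p x / condP p x u
  else if q = Qry.qAB then 1 - piMin p x / condP p x u
  else 0


/-- The length (download cost) of each query. -/
noncomputable def len : Qry → ℝ
  | Qry.qA => 1
  | Qry.qB => 1
  | Qry.qAB => 2

/-!
The kernel is built so that the mass it moves from `(u, x)` to the singleton `{x}` is
`P(U = u, X = x) · π(x) / P(X = x | U = u) = π(x) · P(U = u)`; summing over `u` gives
`P(Q = {x}) = π(x)`. All remaining mass goes to `qAB`, and `E[ℓ(Q)]` is the `ℓ`-weighted sum of
this marginal.
-/

/-- `P(Q = q)` for `Q` drawn from the kernel `w` given `(U, X) ∼ p`. -/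
noncomputable def kernelMarginal {U X Q : Type} [Fintype U] [Fintype X]
    (p : U → X → ℝ) (w : U → X → Q → ℝ) (q : Q) : ℝ :=
  ∑ u, ∑ x, p u x * w u x q

theorem sum_mul_kernel_mul_eq_sum_kernelMarginal_mul {U X Q : Type} [Fintype U] [Fintype X]
    [Fintype Q] (p : U → X → ℝ) (w : U → X → Q → ℝ) (f : Q → ℝ) :
    ∑ u, ∑ x, ∑ q, p u x * w u x q * f q = ∑ q, kernelMarginal p w q * f q := by
  calc ∑ u, ∑ x, ∑ q, p u x * w u x q * f q
      = ∑ u, ∑ q, ∑ x, p u x * w u x q * f q := Finset.sum_congr rfl fun _ _ => Finset.sum_comm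
    _ = ∑ q, ∑ u, ∑ x, p u x * w u x q * f q := Finset.sum_comm
    _ = ∑ q, kernelMarginal p w q * f q := by simp only [kernelMarginal, Finset.sum_mul]

theorem Src.sum_univ {M : Type} [AddCommMonoid M] (f : Src → M) :
    ∑ x, f x = f Src.A + f Src.B :=
  Finset.sum_pair (f := f) (by decide : Src.A ≠ Src.B)

theorem Qry.sum_univ {M : Type} [AddCommMonoid M] (f : Qry → M) :
    ∑ q, f q = f Qry.qA + f Qry.qB + f Qry.qAB := by
  rw [add_assoc, ← Finset.sum_pair (f := f) (by decide : Qry.qB ≠ Qry.qAB)]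
  exact Finset.sum_insert (by decide)

theorem singletonQ_ne_qAB (x : Src) : singletonQ x ≠ Qry.qAB := by
  cases x <;> decide

section kernel

variable {U : Type} [Fintype U] [Nonempty U] (p : U → Src → ℝ)

theorem kernel_singletonQ (u : U) (x y : Src) :
    kernel p u x (singletonQ y) = if x = y then piMin p x / condP p x u else 0 := by
  cases x <;> cases y <;> simp [kernel, singletonQ]

theorem kernel_qAB (u : U) (x : Src) :
    kernel p u x Qry.qAB = 1 - piMin p x / condP p x u := by
  simp [kernel, (singletonQ_ne_qAB x).symm]

omit [Nonempty U] in
theorem mul_div_condP {u : U} {x : Src} (hp : p u x ≠ 0) (c : ℝ) :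
    p u x * (c / condP p x u) = c * ∑ x', p u x' := by
  rw [condP, div_div_eq_mul_div, mul_div_cancel₀ _ hp]

variable {p} (hp : ∀ u x, p u x ≠ 0) (hsum : ∑ u, ∑ x, p u x = 1)
include hp hsum

theorem kernelMarginal_singletonQ (x : Src) :
    kernelMarginal p (kernel p) (singletonQ x) = piMin p x := by
  simp only [kernelMarginal, kernel_singletonQ, mul_ite, mul_zero, Finset.sum_ite_eq',
    Finset.mem_univ, if_true, mul_div_condP p (hp _ _), ← Finset.mul_sum, hsum, mul_one]

theorem kernelMarginal_qAB :
    kernelMarginal p (kernel p) Qry.qAB = 1 - piMin p Src.A - piMin p Src.B := by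
  have hu : ∀ u, ∑ x, p u x * kernel p u x Qry.qAB
      = (1 - ∑ x, piMin p x) * ∑ x, p u x := by
    intro u
    simp only [kernel_qAB, mul_sub, mul_one, mul_div_condP p (hp _ _), Finset.sum_sub_distrib,
      ← Finset.sum_mul]
    ring
  rw [kernelMarginal, Finset.sum_congr rfl fun u _ => hu u, ← Finset.mul_sum, hsum, mul_one,
    Src.sum_univ, sub_sub]

end kernel

/-- Under the ON-OFF privacy kernel, the marginal of `Q` is `P(Q={x}) = π(x)` and
`P(Q=qAB) = 1 - π(A) - π(B)`, so the expected query length is `2 - π(A) - π(B)`. -/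
theorem kernel_marginal {U : Type} [Fintype U] [Nonempty U]
    (p : U → Src → ℝ)
    (hpos : ∀ u x, 0 < p u x)
    (hsum : ∑ u, ∑ x, p u x = 1) :
    (∀ x : Src, ∑ u, ∑ x', p u x' * kernel p u x' (singletonQ x) = piMin p x) ∧
    (∑ u, ∑ x', p u x' * kernel p u x' Qry.qAB
      = 1 - piMin p Src.A - piMin p Src.B) ∧
    (∑ u, ∑ x', ∑ q, p u x' * kernel p u x' q * len q
      = 2 - piMin p Src.A - piMin p Src.B) := by
  have hp : ∀ u x, p u x ≠ 0 := fun u x => (hpos u x).ne'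
  have hA : kernelMarginal p (kernel p) Qry.qA = piMin p Src.A :=
    kernelMarginal_singletonQ hp hsum Src.A
  have hB : kernelMarginal p (kernel p) Qry.qB = piMin p Src.B :=
    kernelMarginal_singletonQ hp hsum Src.B
  refine ⟨kernelMarginal_singletonQ hp hsum, kernelMarginal_qAB hp hsum, ?_⟩
  rw [sum_mul_kernel_mul_eq_sum_kernelMarginal_mul, Qry.sum_univ, hA, hB,
    kernelMarginal_qAB hp hsum]
  simp only [len]
  ring
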